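/- (Preliminary Lemma, vanishing-period case.) Fix 0 < r₀ < 1, let V = {z ∈ ℂ : r₀ < |z| < 1/r₀}, and for g : ℂ → ℂ set g̃(z) := conj( g( 1/conj(z) ) ). Let c₁, c_w, c₁′, c_w′ : ℂ → ℂ be complex differentiable on V with c₁(1) = c_w(1) and c₁′(1) = c_w′(1). For n ∈ ℕ define p_n(z) := ( z^{n+1} c₁(z) − z^{−n} c_w(z) ) / (z − 1) for z ∈ V \ {1}, extended to z = 1 by its limit (the extension across 1 exists and is complex differentiable on V since c₁(1) = c_w(1)); define p′_n analogously from c₁′, c_w′. Fix r with r₀ < r < 1. Then, as n → ∞, ∮_{|z|=1} p_n(z)·conj(p′_n(z)) dz/z − [ ∮_{|z|=r} ( c₁(z)·c̃₁′(z) + c_w(z)·c̃_w′(z) ) / ((1 − z)(1 − z^{−1})) dz/z − 2πi·D + 2πi(2n+1)·c_w(1)·conj(c₁′(1)) ] tends to 0, where D is the complex derivative at z = 1 of the function z ↦ c_w(z)·c̃₁′(z). -/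

import Mathlib

/-!
On the unit circle `conj (p'_n z) = p̃'_n z`, so the integrand extends to the function
`p_n p̃'_n / z`, holomorphic on the annulus, and the circle can be shrunk to radius `r`. Expanding
the product there leaves the main term, the term `z^{2n+1} c₁ c̃w' / (z - 1)²`, which is
`O(r^{2n+1})` on `|z| = r`, and the term `z^{-(2n+1)} cw c̃₁' / (z - 1)²`. Pushing the last one
out to radius `1/r` makes it `O(r^{2n+1})` too, at the cost of the residue at the double pole
`z = 1`: `2πi` times the derivative of `z^{-(2n+1)} cw c̃₁'` at `1`, that is
`2πi (D - (2n+1) cw(1) conj (c₁'(1)))`.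
-/

open Complex ComplexConjugate Metric Set Filter Topology Real

/-- Antiholomorphic reflection in the unit circle: `g̃(z) = conj (g (1 / conj z))`. -/
noncomputable def tilde (g : ℂ → ℂ) : ℂ → ℂ :=
  fun z => (starRingEnd ℂ) (g (1 / (starRingEnd ℂ) z))

def annulus (a b : ℝ) : Set ℂ := {z | a < ‖z‖ ∧ ‖z‖ < b}

lemma isOpen_annulus (a b : ℝ) : IsOpen (annulus a b) :=
  (isOpen_lt continuous_const continuous_norm).inter (isOpen_lt continuous_norm continuous_const)

lemma zero_notMem_annulus {a : ℝ} (ha : 0 ≤ a) (b : ℝ) : (0 : ℂ) ∉ annulus a b :=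
  fun h => (ha.trans_lt h.1).ne' norm_zero

lemma one_mem_annulus {a b : ℝ} (ha : a < 1) (hb : 1 < b) : (1 : ℂ) ∈ annulus a b := by
  simp [annulus, ha, hb]

lemma sphere_subset_annulus {a b ρ : ℝ} (ha : a < ρ) (hb : ρ < b) :
    sphere (0 : ℂ) ρ ⊆ annulus a b := fun z hz => by
  rw [mem_sphere_zero_iff_norm] at hz
  exact ⟨hz ▸ ha, hz ▸ hb⟩

lemma closedBall_diff_ball_subset_annulus {a b r R : ℝ} (ha : a < r) (hb : R < b) :
    closedBall (0 : ℂ) R \ ball 0 r ⊆ annulus a b := by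
  rintro z ⟨hzR, hzr⟩
  rw [mem_closedBall_zero_iff] at hzR
  rw [mem_ball_zero_iff, not_lt] at hzr
  exact ⟨ha.trans_le hzr, hzR.trans_lt hb⟩

lemma inv_conj_mem_annulus {a : ℝ} (ha : 0 < a) {z : ℂ} (hz : z ∈ annulus a a⁻¹) :
    (conj z)⁻¹ ∈ annulus a a⁻¹ := by
  have hz0 : 0 < ‖z‖ := ha.trans hz.1
  simp only [annulus, mem_ofPred_eq, norm_inv, Complex.norm_conj]
  exact ⟨lt_inv_comm₀ ha hz0 |>.mpr hz.2, inv_lt_inv₀ hz0 ha |>.mpr hz.1⟩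

lemma tilde_apply_eq (g : ℂ → ℂ) (z : ℂ) : tilde g z = (conj ∘ g ∘ conj) z⁻¹ := by
  simp [tilde]

lemma tilde_of_norm_eq_one (g : ℂ → ℂ) {z : ℂ} (hz : ‖z‖ = 1) : tilde g z = conj (g z) := by
  simp [tilde_apply_eq, Complex.inv_eq_conj hz]

lemma tilde_one (g : ℂ → ℂ) : tilde g 1 = conj (g 1) := by
  simp [tilde]

lemma DifferentiableAt.tilde {g : ℂ → ℂ} {z : ℂ} (hz : z ≠ 0)
    (hg : DifferentiableAt ℂ g (conj z)⁻¹) : DifferentiableAt ℂ (tilde g) z := by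
  rw [funext (tilde_apply_eq g)]
  refine DifferentiableAt.comp (g := conj ∘ g ∘ conj) z ?_ (differentiableAt_inv hz)
  rw [differentiableAt_conj_conj_iff]
  simpa using hg

lemma DifferentiableOn.tilde_annulus {a : ℝ} (ha : 0 < a) {g : ℂ → ℂ}
    (hg : DifferentiableOn ℂ g (annulus a a⁻¹)) : DifferentiableOn ℂ (tilde g) (annulus a a⁻¹) :=
  fun _ hz => (DifferentiableAt.tilde (ne_of_mem_of_not_mem hz (zero_notMem_annulus ha.le _))
    (hg.differentiableAt ((isOpen_annulus _ _).mem_nhds (inv_conj_mem_annulus ha hz)))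
    ).differentiableWithinAt

lemma circleIntegral_congr_of_eqOn_sphere_diff_singleton {f g : ℂ → ℂ} {c w : ℂ} {R : ℝ}
    (hR : 0 < R) (h : EqOn f g (sphere c R \ {w})) :
    (∮ z in C(c, R), f z) = ∮ z in C(c, R), g z := by
  refine intervalIntegral.integral_congr_ae ?_
  filter_upwards [((countable_singleton w).preimage_circleMap c hR.ne').ae_notMem _]
    with θ hθ _
  rw [h ⟨circleMap_mem_sphere c hR.le θ, hθ⟩]

lemma circleIntegral_eq_of_differentiableOn {U : Set ℂ} (hU : IsOpen U) {f : ℂ → ℂ}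
    (hf : DifferentiableOn ℂ f U) {c : ℂ} {r R : ℝ} (hr : 0 < r) (hrR : r ≤ R)
    (hsub : closedBall c R \ ball c r ⊆ U) : (∮ z in C(c, R), f z) = ∮ z in C(c, r), f z :=
  circleIntegral_eq_of_differentiable_on_annulus_off_countable hr hrR countable_empty
    (hf.continuousOn.mono hsub) fun _ hz => hf.differentiableAt <| hU.mem_nhds <|
      hsub ⟨ball_subset_closedBall hz.1.1, fun h => hz.1.2 (ball_subset_closedBall h)⟩

lemma circleIntegral_sub_inv_of_notMem_closedBall {c w : ℂ} {R : ℝ} (hR : 0 ≤ R)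
    (hw : w ∉ closedBall c R) : (∮ z in C(c, R), (z - w)⁻¹) = 0 :=
  DiffContOnCl.circleIntegral_eq_zero hR <|
    DifferentiableOn.diffContOnCl_ball (U := {w}ᶜ)
      (fun _ hz =>
        ((differentiableAt_id.sub_const w).inv (sub_ne_zero.mpr hz)).differentiableWithinAt)
      fun _ hz hzw => hw (hzw ▸ hz)

lemma div_sub_sq_eq_dslope_dslope (h : ℂ → ℂ) {z w : ℂ} (hz : z ≠ w) :
    h z / (z - w) ^ 2 =
      dslope (dslope h w) w z + deriv h w * (z - w)⁻¹ + h w * (z - w) ^ (-2 : ℤ) := by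
  rw [dslope_of_ne _ hz, slope_def_field, dslope_of_ne _ hz, slope_def_field, dslope_same]
  field_simp
  ring

lemma circleIntegral_div_sub_sq_eq_dslope_dslope {h : ℂ → ℂ} {c w : ℂ} {ρ : ℝ} (hρ : 0 ≤ ρ)
    (hw : w ∉ sphere c ρ) (hQ : ContinuousOn (dslope (dslope h w) w) (sphere c ρ)) :
    (∮ z in C(c, ρ), h z / (z - w) ^ 2) =
      (∮ z in C(c, ρ), dslope (dslope h w) w z) + deriv h w * ∮ z in C(c, ρ), (z - w)⁻¹ := by
  have hne : ∀ z ∈ sphere c ρ, z - w ≠ 0 := fun z hz => sub_ne_zero.mpr (ne_of_mem_of_not_mem hz hw)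
  have hQi : CircleIntegrable (dslope (dslope h w) w) c ρ := hQ.circleIntegrable hρ
  have hIi : CircleIntegrable (fun z => deriv h w * (z - w)⁻¹) c ρ :=
    (continuousOn_const.mul ((continuousOn_id.sub continuousOn_const).inv₀ hne)).circleIntegrable hρ
  have hZi : CircleIntegrable (fun z => h w * (z - w) ^ (-2 : ℤ)) c ρ :=
    (continuousOn_const.mul ((continuousOn_id.sub continuousOn_const).zpow₀ _
      fun z hz => Or.inl (hne z hz))).circleIntegrable hρ
  rw [circleIntegral.integral_congr hρ fun z hz =>
      div_sub_sq_eq_dslope_dslope h (ne_of_mem_of_not_mem hz hw),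
    circleIntegral.integral_add (f := fun z => dslope (dslope h w) w z + _) (hQi.add hIi) hZi,
    circleIntegral.integral_add hQi hIi, circleIntegral.integral_const_mul,
    circleIntegral.integral_const_mul, circleIntegral.integral_sub_zpow_of_ne (by decide),
    mul_zero, add_zero]

lemma circleIntegral_div_sub_sq_eq {U : Set ℂ} (hU : IsOpen U) {h : ℂ → ℂ}
    (hh : DifferentiableOn ℂ h U) {w : ℂ} {r R : ℝ} (hr : 0 < r) (hrw : r < ‖w‖) (hwR : ‖w‖ < R)
    (hsub : closedBall 0 R \ ball 0 r ⊆ U) :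
    (∮ z in C(0, r), h z / (z - w) ^ 2) =
      (∮ z in C(0, R), h z / (z - w) ^ 2) - 2 * π * I * deriv h w := by
  have hwU : U ∈ 𝓝 w := hU.mem_nhds <| hsub ⟨by simpa using hwR.le, by simpa using hrw.le⟩
  have hQ : DifferentiableOn ℂ (dslope (dslope h w) w) U :=
    (differentiableOn_dslope hwU).mpr ((differentiableOn_dslope hwU).mpr hh)
  have hsph : ∀ ρ, r ≤ ρ → ρ ≤ R → sphere 0 ρ ⊆ U := fun ρ hrρ hρR z hz => hsub <| by
    rw [mem_sphere_zero_iff_norm] at hz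
    simp [hz, hρR, hrρ]
  have hrR : r ≤ R := (hrw.trans hwR).le
  rw [circleIntegral_div_sub_sq_eq_dslope_dslope hr.le (by simpa using hrw.ne')
      (hQ.continuousOn.mono (hsph r le_rfl hrR)),
    circleIntegral_div_sub_sq_eq_dslope_dslope (hr.le.trans hrR) (by simpa using hwR.ne)
      (hQ.continuousOn.mono (hsph R hrR le_rfl)),
    circleIntegral_eq_of_differentiableOn hU hQ hr hrR hsub,
    circleIntegral_sub_inv_of_notMem_closedBall hr.le (by simpa using hrw),
    circleIntegral.integral_sub_inv_of_mem_ball (by simpa using hwR)]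
  ring

lemma tendsto_circleIntegral_mul_of_norm_le {u : ℕ → ℂ → ℂ} {g : ℂ → ℂ} {c : ℂ} {R : ℝ}
    (hR : 0 ≤ R) (hg : ContinuousOn g (sphere c R)) {ε : ℕ → ℝ} (hε : Tendsto ε atTop (𝓝 0))
    (hu : ∀ n, ∀ z ∈ sphere c R, ‖u n z‖ ≤ ε n) :
    Tendsto (fun n => ∮ z in C(c, R), u n z * g z) atTop (𝓝 0) := by
  obtain ⟨C, hC⟩ := (isCompact_sphere c R).exists_bound_of_continuousOn hg
  refine squeeze_zero_norm (fun n => circleIntegral.norm_integral_le_of_norm_le_const hR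
    fun z hz => ?_) (by simpa using (hε.mul_const C).const_mul (2 * π * R))
  rw [norm_mul]
  exact mul_le_mul (hu n z hz) (hC z hz) (norm_nonneg _) ((norm_nonneg _).trans (hu n z hz))

lemma tendsto_pow_two_mul_add_one_atTop_nhds_zero {r : ℝ} (hr : 0 ≤ r) (hr1 : r < 1) :
    Tendsto (fun n : ℕ => r ^ (2 * n + 1)) atTop (𝓝 0) :=
  (tendsto_pow_atTop_nhds_zero_of_lt_one hr hr1).comp
    (tendsto_atTop_mono (fun n => by dsimp; omega) tendsto_id)

lemma tendsto_circleIntegral_pow_mul {g : ℂ → ℂ} {r : ℝ} (hr : 0 ≤ r) (hr1 : r < 1)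
    (hg : ContinuousOn g (sphere 0 r)) :
    Tendsto (fun n : ℕ => ∮ z in C(0, r), z ^ (2 * n + 1) * g z) atTop (𝓝 0) :=
  tendsto_circleIntegral_mul_of_norm_le hr hg (tendsto_pow_two_mul_add_one_atTop_nhds_zero hr hr1)
    fun n z hz => by rw [norm_pow, mem_sphere_zero_iff_norm.mp hz]

lemma tendsto_circleIntegral_zpow_neg_mul {g : ℂ → ℂ} {r : ℝ} (hr : 0 < r) (hr1 : r < 1)
    (hg : ContinuousOn g (sphere 0 r⁻¹)) :
    Tendsto (fun n : ℕ => ∮ z in C(0, r⁻¹), z ^ (-(2 * n + 1 : ℤ)) * g z) atTop (𝓝 0) :=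
  tendsto_circleIntegral_mul_of_norm_le (inv_nonneg.mpr hr.le) hg
    (tendsto_pow_two_mul_add_one_atTop_nhds_zero hr.le hr1) fun n z hz => by
      rw [norm_zpow, mem_sphere_zero_iff_norm.mp hz, inv_zpow', neg_neg]
      exact_mod_cast le_rfl

lemma deriv_zpow_mul_at_one (m : ℤ) {h : ℂ → ℂ} (hh : DifferentiableAt ℂ h 1) :
    deriv (fun z => z ^ m * h z) 1 = m * h 1 + deriv h 1 := by
  simpa using ((hasDerivAt_zpow m 1 (Or.inl one_ne_zero)).fun_mul hh.hasDerivAt).deriv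

lemma continuousOn_mul_div_sub_one_sq {f g : ℂ → ℂ} {ρ : ℝ} (hρ : ρ ≠ 1)
    (hf : ContinuousOn f (sphere 0 ρ)) (hg : ContinuousOn g (sphere 0 ρ)) :
    ContinuousOn (fun z => f z * g z / (z - 1) ^ 2) (sphere 0 ρ) := by
  fun_prop (disch := intro (z : ℂ) hz h; simp_all [sub_eq_zero])

/-- The paper's `p_n`: once `a 1 = b 1`, `dslope` at `1` is the holomorphic extension of
`(z ^ (n + 1) * a z - z ^ (-n) * b z) / (z - 1)` across `z = 1`. -/
noncomputable def pExt (n : ℕ) (a b : ℂ → ℂ) : ℂ → ℂ :=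
  dslope (fun z => z ^ (n + 1) * a z - z ^ (-(n : ℤ)) * b z) 1

lemma DifferentiableOn.pExt {U : Set ℂ} (hU : IsOpen U) (h1 : 1 ∈ U) (h0 : 0 ∉ U) {a b : ℂ → ℂ}
    (ha : DifferentiableOn ℂ a U) (hb : DifferentiableOn ℂ b U) (n : ℕ) :
    DifferentiableOn ℂ (pExt n a b) U :=
  (differentiableOn_dslope (hU.mem_nhds h1)).mpr <|
    ((differentiable_pow _).differentiableOn.mul ha).sub
      ((differentiableOn_zpow _ U (Or.inl h0)).mul hb)

lemma pExt_of_ne {a b : ℂ → ℂ} (hab : a 1 = b 1) (n : ℕ) {z : ℂ} (hz : z ≠ 1) :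
    pExt n a b z = (z ^ (n + 1) * a z - z ^ (-(n : ℤ)) * b z) / (z - 1) := by
  simp [pExt, dslope_of_ne _ hz, slope_def_field, hab]

lemma tilde_pExt_of_ne {a b : ℂ → ℂ} (hab : a 1 = b 1) (n : ℕ) {z : ℂ} (hz : z ≠ 1) :
    tilde (pExt n a b) z =
      (z⁻¹ ^ (n + 1) * tilde a z - z⁻¹ ^ (-(n : ℤ)) * tilde b z) / (z⁻¹ - 1) := by
  have hz' : (conj z)⁻¹ ≠ 1 := fun h => hz (by simpa using congrArg conj (inv_eq_one.mp h))
  simp [tilde, pExt_of_ne hab n hz']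

lemma div_sub_one_mul_div_inv_sub_one_div_eq (A B A' B' : ℂ) (n : ℕ) {z : ℂ} (hz0 : z ≠ 0)
    (hz1 : z ≠ 1) :
    (z ^ (n + 1) * A - z ^ (-(n : ℤ)) * B) / (z - 1) *
        ((z⁻¹ ^ (n + 1) * A' - z⁻¹ ^ (-(n : ℤ)) * B') / (z⁻¹ - 1)) / z =
      (A * A' + B * B') / ((1 - z) * (1 - z⁻¹)) / z + z ^ (2 * n + 1) * (A * B' / (z - 1) ^ 2) +
        z ^ (-(2 * n + 1 : ℤ)) * (B * A') / (z - 1) ^ 2 := by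
  rw [show (2 * n + 1 : ℤ) = ((2 * n + 1 : ℕ) : ℤ) by push_cast; ring]
  simp only [zpow_neg, inv_pow, inv_inv, zpow_natCast]
  field_simp
  ring

section

variable {r₀ r : ℝ} {c₁ cw c₁' cw' : ℂ → ℂ}

lemma circleIntegral_unit_eq_pExt (h0 : 0 < r₀) (hr0 : r₀ < r) (hr1 : r < 1)
    (hc₁ : DifferentiableOn ℂ c₁ (annulus r₀ r₀⁻¹)) (hcw : DifferentiableOn ℂ cw (annulus r₀ r₀⁻¹))
    (hc₁' : DifferentiableOn ℂ c₁' (annulus r₀ r₀⁻¹))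
    (hcw' : DifferentiableOn ℂ cw' (annulus r₀ r₀⁻¹))
    (heq : c₁ 1 = cw 1) (heq' : c₁' 1 = cw' 1) (n : ℕ) :
    (∮ z in C(0, 1),
        ((z ^ (n + 1) * c₁ z - z ^ (-(n : ℤ)) * cw z) / (z - 1)) *
          conj ((z ^ (n + 1) * c₁' z - z ^ (-(n : ℤ)) * cw' z) / (z - 1)) / z) =
      ∮ z in C(0, r), pExt n c₁ cw z * tilde (pExt n c₁' cw') z / z := by
  have h1 : 1 < r₀⁻¹ := one_lt_inv₀ h0 |>.mpr (hr0.trans hr1)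
  have h1A : (1 : ℂ) ∈ annulus r₀ r₀⁻¹ := one_mem_annulus (hr0.trans hr1) h1
  have h0A : (0 : ℂ) ∉ annulus r₀ r₀⁻¹ := zero_notMem_annulus h0.le _
  have hF : DifferentiableOn ℂ (fun z => pExt n c₁ cw z * tilde (pExt n c₁' cw') z / z)
      (annulus r₀ r₀⁻¹) :=
    ((hc₁.pExt (isOpen_annulus _ _) h1A h0A hcw n).mul
      ((hc₁'.pExt (isOpen_annulus _ _) h1A h0A hcw' n).tilde_annulus h0)).div
      differentiableOn_id fun _ hz => ne_of_mem_of_not_mem hz h0A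
  rw [← circleIntegral_eq_of_differentiableOn (isOpen_annulus _ _) hF (h0.trans hr0) hr1.le
    (closedBall_diff_ball_subset_annulus hr0 h1)]
  refine circleIntegral_congr_of_eqOn_sphere_diff_singleton (w := 1) one_pos fun z ⟨hz, hz1⟩ => ?_
  rw [mem_sphere_zero_iff_norm] at hz
  rw [pExt_of_ne heq n hz1, tilde_of_norm_eq_one _ hz, pExt_of_ne heq' n hz1]

lemma circleIntegral_pExt_mul_tilde_eq (h0 : 0 < r₀) (hr0 : r₀ < r) (hr1 : r < 1)
    (hc₁ : DifferentiableOn ℂ c₁ (annulus r₀ r₀⁻¹)) (hcw : DifferentiableOn ℂ cw (annulus r₀ r₀⁻¹))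
    (hc₁' : DifferentiableOn ℂ c₁' (annulus r₀ r₀⁻¹))
    (hcw' : DifferentiableOn ℂ cw' (annulus r₀ r₀⁻¹))
    (heq : c₁ 1 = cw 1) (heq' : c₁' 1 = cw' 1) (n : ℕ) :
    (∮ z in C(0, r), pExt n c₁ cw z * tilde (pExt n c₁' cw') z / z) =
      (∮ z in C(0, r), (c₁ z * tilde c₁' z + cw z * tilde cw' z) / ((1 - z) * (1 - z⁻¹)) / z) +
        (∮ z in C(0, r), z ^ (2 * n + 1) * (c₁ z * tilde cw' z / (z - 1) ^ 2)) +
        ∮ z in C(0, r), z ^ (-(2 * n + 1 : ℤ)) * (cw z * tilde c₁' z) / (z - 1) ^ 2 := by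
  have hr : 0 < r := h0.trans hr0
  have hsph : sphere (0 : ℂ) r ⊆ annulus r₀ r₀⁻¹ :=
    sphere_subset_annulus hr0 (hr1.trans (one_lt_inv₀ h0 |>.mpr (hr0.trans hr1)))
  have hne : ∀ z ∈ sphere (0 : ℂ) r, z ≠ 0 ∧ z ≠ 1 := fun z hz => by
    rw [mem_sphere_zero_iff_norm] at hz
    exact ⟨norm_pos_iff.mp (hz ▸ hr), fun h => by simp [h] at hz; linarith⟩
  have h1 := hc₁.continuousOn.mono hsph
  have h2 := hcw.continuousOn.mono hsph
  have h3 := (hc₁'.tilde_annulus h0).continuousOn.mono hsph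
  have h4 := (hcw'.tilde_annulus h0).continuousOn.mono hsph
  have hM : ContinuousOn
      (fun z => (c₁ z * tilde c₁' z + cw z * tilde cw' z) / ((1 - z) * (1 - z⁻¹)) / z)
      (sphere 0 r) := by
    fun_prop (disch :=
      intro (z : ℂ) hz; have := hne z hz; simp_all [sub_eq_zero, eq_comm (a := (1 : ℂ))])
  have hA : ContinuousOn (fun z => z ^ (2 * n + 1) * (c₁ z * tilde cw' z / (z - 1) ^ 2))
      (sphere 0 r) :=
    (continuous_pow _).continuousOn.mul (continuousOn_mul_div_sub_one_sq hr1.ne h1 h4)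
  have hB : ContinuousOn
      (fun z => z ^ (-(2 * n + 1 : ℤ)) * (cw z * tilde c₁' z) / (z - 1) ^ 2) (sphere 0 r) := by
    fun_prop (disch := intro (z : ℂ) hz; have := hne z hz; simp_all [sub_eq_zero])
  calc (∮ z in C(0, r), pExt n c₁ cw z * tilde (pExt n c₁' cw') z / z)
      = ∮ z in C(0, r), ((c₁ z * tilde c₁' z + cw z * tilde cw' z) / ((1 - z) * (1 - z⁻¹)) / z +
          z ^ (2 * n + 1) * (c₁ z * tilde cw' z / (z - 1) ^ 2) +
          z ^ (-(2 * n + 1 : ℤ)) * (cw z * tilde c₁' z) / (z - 1) ^ 2) :=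
        circleIntegral.integral_congr hr.le fun z hz => by
          simp only [pExt_of_ne heq n (hne z hz).2, tilde_pExt_of_ne heq' n (hne z hz).2,
            div_sub_one_mul_div_inv_sub_one_div_eq _ _ _ _ n (hne z hz).1 (hne z hz).2]
    _ = _ := by
      rw [circleIntegral.integral_add _ (hB.circleIntegrable hr.le),
        circleIntegral.integral_add (hM.circleIntegrable hr.le) (hA.circleIntegrable hr.le)]
      exact (hM.add hA).circleIntegrable hr.le

lemma circleIntegral_zpow_mul_div_sub_one_sq (h0 : 0 < r₀) (hr0 : r₀ < r) (hr1 : r < 1)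
    {h : ℂ → ℂ} (hh : DifferentiableOn ℂ h (annulus r₀ r₀⁻¹)) (m : ℤ) :
    (∮ z in C(0, r), z ^ m * h z / (z - 1) ^ 2) =
      (∮ z in C(0, r⁻¹), z ^ m * h z / (z - 1) ^ 2) - 2 * π * I * (m * h 1 + deriv h 1) := by
  have h1 : (1 : ℂ) ∈ annulus r₀ r₀⁻¹ :=
    one_mem_annulus (hr0.trans hr1) (one_lt_inv₀ h0 |>.mpr (hr0.trans hr1))
  rw [← deriv_zpow_mul_at_one m (hh.differentiableAt ((isOpen_annulus _ _).mem_nhds h1))]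
  exact circleIntegral_div_sub_sq_eq (isOpen_annulus _ _)
    ((differentiableOn_zpow m _ (Or.inl (zero_notMem_annulus h0.le _))).mul hh) (h0.trans hr0)
    (by simpa using hr1) (by simpa using one_lt_inv₀ (h0.trans hr0) |>.mpr hr1)
    (closedBall_diff_ball_subset_annulus hr0 (inv_strictAnti₀ h0 hr0))

lemma circleIntegral_unit_sub_eq_remainders (h0 : 0 < r₀) (hr0 : r₀ < r) (hr1 : r < 1)
    (hc₁ : DifferentiableOn ℂ c₁ (annulus r₀ r₀⁻¹)) (hcw : DifferentiableOn ℂ cw (annulus r₀ r₀⁻¹))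
    (hc₁' : DifferentiableOn ℂ c₁' (annulus r₀ r₀⁻¹))
    (hcw' : DifferentiableOn ℂ cw' (annulus r₀ r₀⁻¹))
    (heq : c₁ 1 = cw 1) (heq' : c₁' 1 = cw' 1) (n : ℕ) :
    (∮ z in C(0, 1),
        ((z ^ (n + 1) * c₁ z - z ^ (-(n : ℤ)) * cw z) / (z - 1)) *
          conj ((z ^ (n + 1) * c₁' z - z ^ (-(n : ℤ)) * cw' z) / (z - 1)) / z) -
      ((∮ z in C(0, r), (c₁ z * tilde c₁' z + cw z * tilde cw' z) / ((1 - z) * (1 - z⁻¹)) / z) -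
        2 * π * I * deriv (fun z => cw z * tilde c₁' z) 1 +
        2 * π * I * (2 * (n : ℂ) + 1) * cw 1 * conj (c₁' 1)) =
      (∮ z in C(0, r), z ^ (2 * n + 1) * (c₁ z * tilde cw' z / (z - 1) ^ 2)) +
        ∮ z in C(0, r⁻¹), z ^ (-(2 * n + 1 : ℤ)) * (cw z * tilde c₁' z / (z - 1) ^ 2) := by
  rw [circleIntegral_unit_eq_pExt h0 hr0 hr1 hc₁ hcw hc₁' hcw' heq heq',
    circleIntegral_pExt_mul_tilde_eq h0 hr0 hr1 hc₁ hcw hc₁' hcw' heq heq',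
    circleIntegral_zpow_mul_div_sub_one_sq h0 hr0 hr1 (hcw.fun_mul (hc₁'.tilde_annulus h0)),
    tilde_one]
  simp_rw [mul_div_assoc]
  push_cast
  ring

end

theorem stmt13_general (r₀ r : ℝ) (h0 : 0 < r₀) (hr0 : r₀ < r) (hr1 : r < 1)
    (V : Set ℂ) (hV : V = {z : ℂ | r₀ < ‖z‖ ∧ ‖z‖ < 1 / r₀})
    (c₁ cw c₁' cw' : ℂ → ℂ)
    (hc₁ : DifferentiableOn ℂ c₁ V) (hcw : DifferentiableOn ℂ cw V)
    (hc₁' : DifferentiableOn ℂ c₁' V) (hcw' : DifferentiableOn ℂ cw' V)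
    (heq : c₁ 1 = cw 1) (heq' : c₁' 1 = cw' 1) :
    Filter.Tendsto
      (fun n : ℕ =>
        (∮ z in C(0, 1),
          ((z ^ (n + 1) * c₁ z - z ^ (-(n : ℤ)) * cw z) / (z - 1)) *
            (starRingEnd ℂ) ((z ^ (n + 1) * c₁' z - z ^ (-(n : ℤ)) * cw' z) / (z - 1)) / z) -
        ((∮ z in C(0, r),
            (c₁ z * tilde c₁' z + cw z * tilde cw' z) / ((1 - z) * (1 - z⁻¹)) / z) -
          2 * Real.pi * Complex.I * deriv (fun z => cw z * tilde c₁' z) 1 +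
          2 * Real.pi * Complex.I * (2 * (n : ℂ) + 1) * cw 1 * (starRingEnd ℂ) (c₁' 1)))
      Filter.atTop (nhds 0) := by
  have hV' : V = annulus r₀ r₀⁻¹ := by rw [hV, one_div]; rfl
  subst hV'
  have hr : 0 < r := h0.trans hr0
  have hsph_r : sphere (0 : ℂ) r ⊆ annulus r₀ r₀⁻¹ :=
    sphere_subset_annulus hr0 (hr1.trans (one_lt_inv₀ h0 |>.mpr (hr0.trans hr1)))
  have hsph_R : sphere (0 : ℂ) r⁻¹ ⊆ annulus r₀ r₀⁻¹ :=
    sphere_subset_annulus ((hr0.trans hr1).trans (one_lt_inv₀ hr |>.mpr hr1))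
      (inv_strictAnti₀ h0 hr0)
  have hI₁ := tendsto_circleIntegral_pow_mul hr.le hr1 <| continuousOn_mul_div_sub_one_sq hr1.ne
    (hc₁.continuousOn.mono hsph_r) ((hcw'.tilde_annulus h0).continuousOn.mono hsph_r)
  have hI₂ := tendsto_circleIntegral_zpow_neg_mul hr hr1 <|
    continuousOn_mul_div_sub_one_sq (one_lt_inv₀ hr |>.mpr hr1).ne'
      (hcw.continuousOn.mono hsph_R) ((hc₁'.tilde_annulus h0).continuousOn.mono hsph_R)
  convert hI₁.add hI₂ using 2 with n
  · exact circleIntegral_unit_sub_eq_remainders h0 hr0 hr1 hc₁ hcw hc₁' hcw' heq heq' n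
  · simp

theorem stmt13 (r₀ r : ℝ) (h0 : 0 < r₀) (h1 : r₀ < 1) (hr0 : r₀ < r) (hr1 : r < 1)
    (V : Set ℂ) (hV : V = {z : ℂ | r₀ < ‖z‖ ∧ ‖z‖ < 1 / r₀})
    (c₁ cw c₁' cw' : ℂ → ℂ)
    (hc₁ : DifferentiableOn ℂ c₁ V) (hcw : DifferentiableOn ℂ cw V)
    (hc₁' : DifferentiableOn ℂ c₁' V) (hcw' : DifferentiableOn ℂ cw' V)
    (heq : c₁ 1 = cw 1) (heq' : c₁' 1 = cw' 1) :
    Filter.Tendsto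
      (fun n : ℕ =>
        (∮ z in C(0, 1),
          ((z ^ (n + 1) * c₁ z - z ^ (-(n : ℤ)) * cw z) / (z - 1)) *
            (starRingEnd ℂ) ((z ^ (n + 1) * c₁' z - z ^ (-(n : ℤ)) * cw' z) / (z - 1)) / z) -
        ((∮ z in C(0, r),
            (c₁ z * tilde c₁' z + cw z * tilde cw' z) / ((1 - z) * (1 - z⁻¹)) / z) -
          2 * Real.pi * Complex.I * deriv (fun z => cw z * tilde c₁' z) 1 +
          2 * Real.pi * Complex.I * (2 * (n : ℂ) + 1) * cw 1 * (starRingEnd ℂ) (c₁' 1)))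
      Filter.atTop (nhds 0) :=
  stmt13_general r₀ r h0 hr0 hr1 V hV c₁ cw c₁' cw' hc₁ hcw hc₁' hcw' heq heq'
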